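/- arXiv:2204.11902 — 4 statements merged into one kernel-verified Lean document; each statement's English description precedes it below -/
import Mathlib

section
/- Let S and P be types, L a type of action labels, F : S → L → Multiset S and G : P → L → Multiset P labeled transition systems, and h : S → P a function satisfying (C1) h is injective, and (C2) G (h s) α = Multiset.map h (F s α) for every s : S and every label α : L. Let R ⊆ P be the reachable set from Set.range h under G. Then h is a bijection from S onto R, and for all s s' : S and every label α, the multiplicity of s' in F s α equals the multiplicity of h s' in G (h s) α. (Consequently the labeled transition graphs (S, F) and (R, G) are isomorphic via h — Theorem 1 of the paper.) -/
/-- The step relation of a labeled transition system `F`: `v` steps to `v'`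
iff `v' ∈ F v α` for some label `α`. -/
def LTS.Step {V L : Type*} (F : V → L → Multiset V) (v v' : V) : Prop :=
  ∃ α : L, v' ∈ F v α

/-- The reachable set from `A` under the labeled transition system `F`:
states related to some element of `A` by the reflexive-transitive closure
of the step relation. -/
def LTS.Reachable {V L : Type*} (F : V → L → Multiset V) (A : Set V) : Set V :=
  {v | ∃ a ∈ A, Relation.ReflTransGen (LTS.Step F) a v}

theorem stmt_0 {S P L : Type*} [DecidableEq S] [DecidableEq P]
    (F : S → L → Multiset S) (G : P → L → Multiset P) (h : S → P)
    (C1 : Function.Injective h)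
    (C2 : ∀ (s : S) (α : L), G (h s) α = Multiset.map h (F s α))
    (R : Set P) (hR : R = LTS.Reachable G (Set.range h)) :
    Set.BijOn h Set.univ R ∧
      ∀ (s s' : S) (α : L),
        Multiset.count s' (F s α) = Multiset.count (h s') (G (h s) α) := by
  have hRrange : R = Set.range h := by
    subst hR
    ext p
    constructor
    · rintro ⟨a, ⟨s, rfl⟩, hrel⟩
      induction hrel with
      | refl => exact ⟨s, rfl⟩
      | tail _ hstep ih =>
        obtain ⟨t, rfl⟩ := ih
        obtain ⟨α, hmem⟩ := hstep
        rw [C2] at hmem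
        obtain ⟨u, _, hu⟩ := Multiset.mem_map.mp hmem
        exact ⟨u, hu⟩
    · rintro ⟨s, rfl⟩
      exact ⟨h s, ⟨s, rfl⟩, Relation.ReflTransGen.refl⟩
  constructor
  · subst hRrange
    exact ⟨fun s _ => ⟨s, rfl⟩, fun a _ b _ hab => C1 hab,
      fun p ⟨s, hs⟩ => ⟨s, Set.mem_univ s, hs⟩⟩
  · intro s s' α
    rw [C2, Multiset.count_map_eq_count' h _ C1]
end

section
/- Let S and P be types, L a type of action labels, F : S → L → Multiset S and G : P → L → Multiset P labeled transition systems, and h : S → P a function satisfying (C1) h is injective, and (C2) G (h s) α = Multiset.map h (F s α) for every s : S and every label α : L. Let R ⊆ P be the reachable set from Set.range h under G. Then the map from S to R induced by h (sending s to h s, which lies in R) is a bijection between S and R. -/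
theorem stmt_2 {S P L : Type*}
    (F : S → L → Multiset S) (G : P → L → Multiset P) (h : S → P)
    (C1 : Function.Injective h)
    (C2 : ∀ (s : S) (α : L), G (h s) α = Multiset.map h (F s α))
    (R : Set P) (hR : R = LTS.Reachable G (Set.range h)) :
    Set.BijOn h Set.univ R := by
  subst hR
  refine ⟨fun s _ => ⟨h s, ⟨s, rfl⟩, Relation.ReflTransGen.refl⟩,
    fun a _ b _ hab => C1 hab, fun p hp => ?_⟩
  obtain ⟨a, ⟨s, rfl⟩, hreach⟩ := hp
  suffices h' : p ∈ Set.range h by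
    obtain ⟨t, rfl⟩ := h'; exact ⟨t, trivial, rfl⟩
  induction hreach with
  | refl => exact ⟨s, rfl⟩
  | tail _ hstep ih =>
    obtain ⟨t, rfl⟩ := ih
    obtain ⟨α, hmem⟩ := hstep
    rw [C2] at hmem
    obtain ⟨u, _, rfl⟩ := Multiset.mem_map.mp hmem
    exact ⟨u, rfl⟩
end

section
/- Let S and P be types, L a type of action labels, F : S → L → Multiset S and G : P → L → Multiset P labeled transition systems, and h : S → P a function satisfying (C1) h is injective, and (C2) G (h s) α = Multiset.map h (F s α) for every s : S and every label α : L. Let R ⊆ P be the reachable set from Set.range h under G. Then the map sending a triple (s, α, s') to (h s, α, h s') is a bijection from the set of labeled edges {(s, α, s') : S × L × S | s' ∈ F s α} of (S, F) onto the set of labeled edges {(p, α, p') : P × L × P | p ∈ R ∧ p' ∈ G p α} of (R, G). -/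
theorem stmt_5 {S P L : Type*}
    (F : S → L → Multiset S) (G : P → L → Multiset P) (h : S → P)
    (C1 : Function.Injective h)
    (C2 : ∀ (s : S) (α : L), G (h s) α = Multiset.map h (F s α))
    (R : Set P) (hR : R = LTS.Reachable G (Set.range h)) :
    Set.BijOn (fun e : S × L × S => (h e.1, e.2.1, h e.2.2))
      {e : S × L × S | e.2.2 ∈ F e.1 e.2.1}
      {e : P × L × P | e.1 ∈ R ∧ e.2.2 ∈ G e.1 e.2.1} := by
  have hRrange : R = Set.range h := by
    subst hR
    apply Set.Subset.antisymm
    · rintro p ⟨a, ⟨s, rfl⟩, hrel⟩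
      induction hrel with
      | refl => exact ⟨s, rfl⟩
      | tail _ hstep ih =>
        obtain ⟨t, rfl⟩ := ih
        obtain ⟨α, hmem⟩ := hstep
        rw [C2] at hmem
        obtain ⟨u, _, hu⟩ := Multiset.mem_map.mp hmem
        exact ⟨u, hu⟩
    · rintro p hp
      exact ⟨p, hp, Relation.ReflTransGen.refl⟩
  subst hRrange
  refine ⟨?_, ?_, ?_⟩
  · rintro ⟨s, α, s'⟩ hmem
    exact ⟨⟨s, rfl⟩, by simpa [C2] using Multiset.mem_map_of_mem h hmem⟩
  · rintro ⟨s, α, s'⟩ _ ⟨t, β, t'⟩ _ heq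
    simp only [Prod.mk.injEq] at heq
    obtain ⟨h1, h2, h3⟩ := heq
    simp [C1 h1, h2, C1 h3]
  · rintro ⟨p, α, p'⟩ ⟨⟨s, rfl⟩, hmem⟩
    rw [C2] at hmem
    obtain ⟨s', hs', rfl⟩ := Multiset.mem_map.mp hmem
    exact ⟨(s, α, s'), hs', rfl⟩
end

section
/- Let S and P be types with S finite, L a type of action labels, F : S → L → Multiset S and G : P → L → Multiset P labeled transition systems, and h : S → P a function satisfying (C1) h is injective, and (C2) G (h s) α = Multiset.map h (F s α) for every s : S and every label α : L. Let R ⊆ P be the reachable set from Set.range h under G. Then R is a finite set and its cardinality equals the cardinality of S. -/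
theorem stmt_6 {S P L : Type*} [Finite S]
    (F : S → L → Multiset S) (G : P → L → Multiset P) (h : S → P)
    (C1 : Function.Injective h)
    (C2 : ∀ (s : S) (α : L), G (h s) α = Multiset.map h (F s α))
    (R : Set P) (hR : R = LTS.Reachable G (Set.range h)) :
    R.Finite ∧ Nat.card R = Nat.card S := by
  have key : R = Set.range h := by
    subst hR
    ext p
    constructor
    · rintro ⟨a, ⟨s, rfl⟩, hrel⟩
      induction hrel with
      | refl => exact ⟨s, rfl⟩
      | tail _ hstep ih =>
        obtain ⟨t, rfl⟩ := ih
        obtain ⟨α, hmem⟩ := hstep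
        rw [C2] at hmem
        obtain ⟨u, _, rfl⟩ := Multiset.mem_map.mp hmem
        exact ⟨u, rfl⟩
    · rintro ⟨s, rfl⟩
      exact ⟨h s, ⟨s, rfl⟩, Relation.ReflTransGen.refl⟩
  subst key
  refine ⟨Set.finite_range h, ?_⟩
  rw [Nat.card_range_of_injective C1]
end
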